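/- arXiv:1904.05616 — 8 statements merged into one kernel-verified Lean document; each statement's English description precedes it below -/
import Mathlib

section
/- Let X be a separable linearly ordered topological space (LOTS) and A ⊆ X a nonempty subset with no minimum. Then there exists a strictly decreasing sequence (a_n) in A such that the set of lower bounds of A equals the set of lower bounds of {a_n : n ∈ ℕ}. -/
theorem stmt1 {X : Type*} [LinearOrder X] [TopologicalSpace X] [OrderTopology X]
    [TopologicalSpace.SeparableSpace X] (A : Set X) (hne : A.Nonempty)
    (hmin : ¬∃ m, IsLeast A m) :
    ∃ a : ℕ → X, (∀ n, a n ∈ A) ∧ StrictAnti a ∧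
      lowerBounds A = lowerBounds (Set.range a) := by
  classical
  obtain ⟨a₀, ha₀⟩ := hne
  obtain ⟨D, hDc, hDd⟩ := TopologicalSpace.exists_countable_dense X
  have hbelow : ∀ y ∈ A, ∃ z ∈ A, z < y := by
    intro y hy
    by_contra h
    push_neg at h
    exact hmin ⟨y, hy, fun b hb => (h b hb)⟩
  set f : X → X := fun d => if h : ∃ a ∈ A, a ≤ d then h.choose else a₀ with hf
  have hfA : ∀ d, f d ∈ A := by
    intro d
    simp only [hf]
    split
    · next h => exact h.choose_spec.1
    · exact ha₀
  have hfle : ∀ d, (∃ a ∈ A, a ≤ d) → f d ≤ d := by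
    intro d h
    simp only [hf, dif_pos h]
    exact h.choose_spec.2
  set C : Set X := insert a₀ (f '' D) with hC
  have hCc : C.Countable := (hDc.image f).insert a₀
  have hCA : C ⊆ A := by
    intro x hx
    rcases hx with rfl | ⟨d, _, rfl⟩
    · exact ha₀
    · exact hfA d
  have hCne : C.Nonempty := ⟨a₀, Set.mem_insert _ _⟩
  have hco : ∀ y ∈ A, ∃ c ∈ C, c < y := by
    intro y hy
    obtain ⟨z, hz, hzy⟩ := hbelow y hy
    obtain ⟨z', hz', hz'z⟩ := hbelow z hz
    obtain ⟨d, hdD, hd⟩ := hDd.exists_mem_open isOpen_Ioo ⟨z, hz'z, hzy⟩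
    have hex : ∃ a ∈ A, a ≤ d := ⟨z', hz', hd.1.le⟩
    exact ⟨f d, Set.mem_insert_of_mem _ ⟨d, hdD, rfl⟩, lt_of_le_of_lt (hfle d hex) hd.2⟩
  obtain ⟨e, he⟩ := hCc.exists_eq_range hCne
  have heA : ∀ n, e n ∈ A := fun n => hCA (he ▸ Set.mem_range_self n)
  have step : ∀ x ∈ A, ∀ n : ℕ, ∃ z, z ∈ A ∧ z < x ∧ z ≤ e n := by
    intro x hx n
    obtain ⟨c, hcC, hcx⟩ := hco x hx
    refine ⟨min c (e n), ?_, lt_of_le_of_lt (min_le_left _ _) hcx, min_le_right _ _⟩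
    rcases min_choice c (e n) with h | h <;> rw [h]
    · exact hCA hcC
    · exact heA n
  set g : X → ℕ → X := fun x n => if h : ∃ z, z ∈ A ∧ z < x ∧ z ≤ e n then h.choose else a₀
    with hg
  set a : ℕ → X := fun n => Nat.rec a₀ (fun n x => g x n) n with ha
  have ha0 : a 0 = a₀ := rfl
  have hasucc : ∀ n, a (n + 1) = g (a n) n := fun n => rfl
  have hmem : ∀ n, a n ∈ A := by
    intro n
    induction n with
    | zero => exact ha₀
    | succ n ih =>
      rw [hasucc n, hg]
      simp only
      have h := step (a n) ih n
      rw [dif_pos h]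
      exact h.choose_spec.1
  have hstep : ∀ n, a (n + 1) < a n ∧ a (n + 1) ≤ e n := by
    intro n
    have h := step (a n) (hmem n) n
    rw [hasucc n, hg]
    simp only
    rw [dif_pos h]
    exact ⟨h.choose_spec.2.1, h.choose_spec.2.2⟩
  refine ⟨a, hmem, strictAnti_nat_of_succ_lt (fun n => (hstep n).1), ?_⟩
  apply le_antisymm
  · exact lowerBounds_mono_set (fun x hx => by obtain ⟨n, rfl⟩ := hx; exact hmem n)
  · intro x hx y hy
    obtain ⟨c, hcC, hcy⟩ := hco y hy
    rw [he] at hcC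
    obtain ⟨m, rfl⟩ := hcC
    have h1 : x ≤ a (m + 1) := hx (Set.mem_range_self (m + 1))
    exact h1.trans ((hstep m).2.trans hcy.le)
end

section
/- Every separable linearly ordered topological space is first countable. -/
open Set Filter Topology TopologicalSpace

section OrderTopology

variable {X : Type*} [LinearOrder X] [TopologicalSpace X] [OrderTopology X]

/-- Nontriviality of `𝓝[>] x` means that no `b > x` covers `x`, so every `Ioo x b` meets `D`. -/
theorem Dense.hasBasis_nhdsGT {D : Set X} (hD : Dense D) {x : X} [(𝓝[>] x).NeBot] :
    (𝓝[>] x).HasBasis (fun d => d ∈ D ∧ x < d) (Ioo x) := by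
  obtain ⟨y, hxy⟩ := (𝓝[>] x).nonempty_of_mem self_mem_nhdsWithin
  refine (nhdsGT_basis_of_exists_gt ⟨y, hxy⟩).to_hasBasis (fun b hxb => ?_)
    fun d hd => ⟨d, hd.2, Subset.rfl⟩
  obtain ⟨d, hdD, hd⟩ :=
    hD.exists_mem_open isOpen_Ioo ((𝓝[>] x).nonempty_of_mem (Ioo_mem_nhdsGT hxb))
  exact ⟨d, ⟨hdD, hd.1⟩, Ioo_subset_Ioo_right hd.2.le⟩

theorem isCountablyGenerated_nhdsGT [SeparableSpace X] (x : X) :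
    (𝓝[>] x).IsCountablyGenerated := by
  obtain h | _ := (𝓝[>] x).eq_or_neBot
  · rw [h]
    infer_instance
  obtain ⟨D, hDc, hD⟩ := exists_countable_dense X
  exact HasCountableBasis.isCountablyGenerated
    ⟨hD.hasBasis_nhdsGT, hDc.mono fun _ hd => hd.1⟩

end OrderTopology

theorem stmt3 {X : Type*} [LinearOrder X] [TopologicalSpace X] [OrderTopology X]
    [TopologicalSpace.SeparableSpace X] : FirstCountableTopology X := by
  refine ⟨fun x => ?_⟩
  have : (𝓝[>] x).IsCountablyGenerated := isCountablyGenerated_nhdsGT x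
  have : (𝓝[<] x).IsCountablyGenerated := isCountablyGenerated_nhdsGT (X := Xᵒᵈ) x
  rw [← nhdsLE_sup_nhdsGT, ← Iio_insert, nhdsWithin_insert]
  infer_instance
end

section
/- A LOTS X is second countable if and only if X is separable and the set of points that are either left-isolated or right-isolated is countable. -/
open Set TopologicalSpace

theorem stmt4 {X : Type*} [LinearOrder X] [TopologicalSpace X] [OrderTopology X] :
    SecondCountableTopology X ↔
      (TopologicalSpace.SeparableSpace X ∧
        {x : X | (IsMin x ∨ ∃ z < x, Set.Ioo z x = ∅) ∨
          (IsMax x ∨ ∃ z > x, Set.Ioo x z = ∅)}.Countable) := by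
  constructor
  · intro h
    refine ⟨inferInstance, ?_⟩
    have h1 : Set.Countable {x : X | ∃ y, y < x ∧ Ioo y x = ∅} :=
      countable_of_isolated_left'
    have h2 : Set.Countable {x : X | ∃ y, x < y ∧ Ioo x y = ∅} := by
      simpa only [← covBy_iff_Ioo_eq] using countable_setOf_covBy_right
    have hmin : Set.Countable {x : X | IsMin x} := by
      have : Set.Subsingleton {x : X | IsMin x} := by
        intro a ha b hb
        exact le_antisymm (ha.isBot b) (hb.isBot a)
      exact this.countable
    have hmax : Set.Countable {x : X | IsMax x} := by
      have : Set.Subsingleton {x : X | IsMax x} := by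
        intro a ha b hb
        exact le_antisymm (hb.isTop a) (ha.isTop b)
      exact this.countable
    refine Set.Countable.mono ?_ (((hmin.union h1).union hmax).union h2)
    rintro x ((hx | ⟨z, hz, hz'⟩) | (hx | ⟨z, hz, hz'⟩))
    · exact Or.inl (Or.inl (Or.inl hx))
    · exact Or.inl (Or.inl (Or.inr ⟨z, hz, hz'⟩))
    · exact Or.inl (Or.inr hx)
    · exact Or.inr ⟨z, hz, hz'⟩
  · rintro ⟨hsep, hcnt⟩
    obtain ⟨D, Dcnt, Ddense⟩ := hsep.exists_countable_dense
    set J : Set X := {x : X | (IsMin x ∨ ∃ z < x, Set.Ioo z x = ∅) ∨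
          (IsMax x ∨ ∃ z > x, Set.Ioo x z = ∅)} with hJ
    set S : Set X := D ∪ J with hS
    have Scnt : S.Countable := Dcnt.union hcnt
    -- helper: pick a lower endpoint in S
    have lower : ∀ a x : X, a < x → ∃ a' ∈ S, a ≤ a' ∧ a' < x := by
      intro a x hax
      rcases eq_empty_or_nonempty (Ioo a x) with he | hne
      · refine ⟨a, Or.inr (Or.inr (Or.inr ⟨x, hax, he⟩)), le_rfl, hax⟩
      · obtain ⟨d, hd, hd'⟩ := Ddense.inter_open_nonempty _ isOpen_Ioo hne
        exact ⟨d, Or.inl hd', hd.1.le, hd.2⟩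
    have upper : ∀ x b : X, x < b → ∃ b' ∈ S, x < b' ∧ b' ≤ b := by
      intro x b hxb
      rcases eq_empty_or_nonempty (Ioo x b) with he | hne
      · refine ⟨b, Or.inr (Or.inl (Or.inr ⟨x, hxb, he⟩)), hxb, le_rfl⟩
      · obtain ⟨d, hd, hd'⟩ := Ddense.inter_open_nonempty _ isOpen_Ioo hne
        exact ⟨d, Or.inl hd', hd.1, hd.2.le⟩
    set B : Set (Set X) := insert Set.univ
      ((Iio '' S) ∪ (Ioi '' S) ∪ ((fun p : X × X => Ioo p.1 p.2) '' (S ×ˢ S))) with hB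
    have Bcnt : B.Countable :=
      (((Scnt.image _).union (Scnt.image _)).union ((Scnt.prod Scnt).image _)).insert _
    have Bbasis : IsTopologicalBasis B := by
      refine isTopologicalBasis_of_isOpen_of_nhds ?_ ?_
      · rintro u (rfl | ((⟨s, _, rfl⟩ | ⟨s, _, rfl⟩) | ⟨⟨s, t⟩, _, rfl⟩))
        · exact isOpen_univ
        · exact isOpen_Iio
        · exact isOpen_Ioi
        · exact isOpen_Ioo
      · intro x u hxu hu
        have hnhds : u ∈ nhds x := hu.mem_nhds hxu
        by_cases hmin : ∃ l, l < x
        · -- not a minimum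
          obtain ⟨l, hl, hlu⟩ := exists_Ioc_subset_of_mem_nhds hnhds hmin
          by_cases hmax : ∃ r, x < r
          · obtain ⟨r, hr, hru⟩ := exists_Ico_subset_of_mem_nhds hnhds hmax
            obtain ⟨a, haS, hla, hax⟩ := lower l x hl
            obtain ⟨b, hbS, hxb, hbr⟩ := upper x r hr
            refine ⟨Ioo a b, Or.inr (Or.inr ⟨⟨a, b⟩, ⟨haS, hbS⟩, rfl⟩), ⟨hax, hxb⟩, ?_⟩
            intro y ⟨hy1, hy2⟩
            rcases le_or_gt y x with hyx | hyx
            · exact hlu ⟨hla.trans_lt hy1, hyx⟩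
            · exact hru ⟨hyx.le, hy2.trans_le hbr⟩
          · -- x is a maximum
            push_neg at hmax
            obtain ⟨a, haS, hla, hax⟩ := lower l x hl
            refine ⟨Ioi a, Or.inr (Or.inl (Or.inr ⟨a, haS, rfl⟩)), hax, ?_⟩
            intro y hy
            exact hlu ⟨hla.trans_lt hy, hmax y⟩
        · -- x is a minimum
          push_neg at hmin
          by_cases hmax : ∃ r, x < r
          · obtain ⟨r, hr, hru⟩ := exists_Ico_subset_of_mem_nhds hnhds hmax
            obtain ⟨b, hbS, hxb, hbr⟩ := upper x r hr
            refine ⟨Iio b, Or.inr (Or.inl (Or.inl ⟨b, hbS, rfl⟩)), hxb, ?_⟩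
            intro y hy
            exact hru ⟨hmin y, hy.trans_le hbr⟩
          · -- x is both min and max: X = {x}
            push_neg at hmax
            refine ⟨Set.univ, Or.inl rfl, trivial, fun y _ => ?_⟩
            have : y = x := le_antisymm (hmax y) (hmin y)
            rwa [this]
    exact Bbasis.secondCountableTopology Bcnt
end

section
/- Let X be a separable LOTS and x ∈ X. Then x is not left-isolated if and only if there exists a sequence (x_n) in X with x_n < x_{n+1} < x for all n and x_n converging to x in the order topology. -/
open Filter Topology

theorem stmt5 {X : Type*} [LinearOrder X] [TopologicalSpace X] [OrderTopology X]
    [TopologicalSpace.SeparableSpace X] (x : X) :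
    ¬(IsMin x ∨ ∃ z < x, Set.Ioo z x = ∅) ↔
      ∃ u : ℕ → X, (∀ n, u n < u (n + 1) ∧ u (n + 1) < x) ∧
        Tendsto u atTop (𝓝 x) := by
  constructor
  · intro h
    push_neg at h
    obtain ⟨hmin, hioo⟩ := h
    obtain ⟨D, Dcount, Ddense⟩ := TopologicalSpace.exists_countable_dense X
    -- key: for every y < x there is d ∈ D with y < d < x
    have key : ∀ y : X, y < x → ∃ d, d ∈ D ∧ y < d ∧ d < x := by
      intro y hy
      have hne : (Set.Ioo y x).Nonempty := hioo y hy
      obtain ⟨d, hdD, hd⟩ := Ddense.exists_mem_open isOpen_Ioo hne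
      exact ⟨d, hdD, hd.1, hd.2⟩
    -- S = D ∩ Iio x is countable and nonempty
    obtain ⟨z, hz⟩ := not_isMin_iff.1 hmin
    obtain ⟨d0, hd0D, _, hd0x⟩ := key z hz
    have hSne : (D ∩ Set.Iio x).Nonempty := ⟨d0, hd0D, hd0x⟩
    have hScount : (D ∩ Set.Iio x).Countable := Dcount.mono Set.inter_subset_left
    obtain ⟨e, he⟩ := Set.Countable.exists_eq_range hScount hSne
    have hex : ∀ n, e n < x := by
      intro n
      have : e n ∈ D ∩ Set.Iio x := he ▸ Set.mem_range_self n
      exact this.2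
    -- choice function
    choose f hfD hf1 hf2 using key
    -- recursive sequence
    let v : ℕ → {y : X // y < x} := fun n =>
      Nat.rec ⟨d0, hd0x⟩
        (fun n p => ⟨f (max p.1 (e n)) (max_lt p.2 (hex n)),
          hf2 (max p.1 (e n)) (max_lt p.2 (hex n))⟩) n
    set u : ℕ → X := fun n => (v n).1 with hu
    have hstep : ∀ n, u n < u (n + 1) ∧ u (n + 1) < x := by
      intro n
      refine ⟨?_, (v (n + 1)).2⟩
      have := hf1 (max (v n).1 (e n)) (max_lt (v n).2 (hex n))
      exact lt_of_le_of_lt (le_max_left _ _) this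
    have hegt : ∀ n, e n < u (n + 1) := by
      intro n
      have := hf1 (max (v n).1 (e n)) (max_lt (v n).2 (hex n))
      exact lt_of_le_of_lt (le_max_right _ _) this
    have hmono : StrictMono u := strictMono_nat_of_lt_succ fun n => (hstep n).1
    refine ⟨u, hstep, ?_⟩
    rw [tendsto_order]
    constructor
    · intro z hzx
      have : f z hzx ∈ Set.range e := he ▸ ⟨hfD z hzx, hf2 z hzx⟩
      obtain ⟨k, hk⟩ := this
      refine eventually_atTop.2 ⟨k + 1, fun n hn => ?_⟩
      calc z < f z hzx := hf1 z hzx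
        _ = e k := hk.symm
        _ < u (k + 1) := hegt k
        _ ≤ u n := hmono.le_iff_le.2 hn
    · intro b hb
      refine Eventually.of_forall fun n => lt_trans ?_ hb
      exact (v n).2
  · rintro ⟨u, hu, hlim⟩
    rintro (hmin | ⟨z, hz, hzx⟩)
    · exact absurd (hmin (le_of_lt ((hu 0).1.trans (hu 0).2))) (not_le.2 ((hu 0).1.trans (hu 0).2))
    · have : ∀ᶠ n in atTop, u n ∈ Set.Ioi z := hlim (Ioi_mem_nhds hz)
      obtain ⟨n, hn⟩ := this.exists
      have hnx : u n < x := (hu n).1.trans (hu n).2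
      exact Set.eq_empty_iff_forall_notMem.1 hzx (u n) ⟨hn, hnx⟩
end

section
/- Let X be a separable LOTS and μ a probability measure on its Borel σ-algebra with cdf F. If X has no minimum then inf F(X) = 0, and in all cases sup F(X) = 1. -/
/-!
The cdf `x ↦ μ (Iic x)` is monotone, so the supremum and infimum of its range are its limits at
`atTop` and `atBot`. In a separable linear order these filters are countably generated, so
continuity of the measure along the monotone family `Iic x` identifies the limits as
`μ (⋃ x, Iic x) = μ univ = 1` and, when there is no minimum, `μ (⋂ x, Iic x) = μ ∅ = 0`.
-/

open MeasureTheory Filter Set Topology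

namespace MeasureTheory

variable {α : Type*} [MeasurableSpace α] (μ : Measure α) [IsFiniteMeasure μ]

theorem monotone_measureReal_Iic [Preorder α] : Monotone fun x => μ.real (Iic x) :=
  fun _ _ hxy => measureReal_mono (Iic_subset_Iic.2 hxy)

theorem isLUB_range_measureReal_Iic [Preorder α] [IsDirectedOrder α] [Nonempty α]
    [(atTop : Filter α).IsCountablyGenerated] :
    IsLUB (range fun x => μ.real (Iic x)) (μ.real univ) :=
  isLUB_of_tendsto_atTop (monotone_measureReal_Iic μ)
    ((ENNReal.tendsto_toReal (measure_ne_top μ univ)).comp (tendsto_measure_Iic_atTop μ))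

theorem tendsto_measure_Iic_atBot [Preorder α] [NoBotOrder α] [Nonempty α]
    [(atBot : Filter α).IsCountablyGenerated] (hIic : ∀ x : α, MeasurableSet (Iic x)) :
    Tendsto (fun x => μ (Iic x)) atBot (𝓝 0) := by
  have hempty : ⋂ x : α, Iic x = ∅ := iInter_eq_empty_iff.2 exists_not_ge
  rw [← measure_empty (μ := μ), ← hempty]
  exact tendsto_measure_iInter_atBot (fun x => (hIic x).nullMeasurableSet) monotone_Iic
    ⟨Classical.arbitrary α, measure_ne_top μ _⟩

theorem isGLB_range_measureReal_Iic [Preorder α] [IsCodirectedOrder α] [NoBotOrder α]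
    [Nonempty α] [(atBot : Filter α).IsCountablyGenerated]
    (hIic : ∀ x : α, MeasurableSet (Iic x)) : IsGLB (range fun x => μ.real (Iic x)) 0 :=
  isGLB_of_tendsto_atBot (monotone_measureReal_Iic μ)
    ((ENNReal.tendsto_toReal ENNReal.zero_ne_top).comp (tendsto_measure_Iic_atBot μ hIic))

end MeasureTheory

theorem stmt9 {X : Type*} [LinearOrder X] [TopologicalSpace X] [OrderTopology X]
    [TopologicalSpace.SeparableSpace X] [MeasurableSpace X] [BorelSpace X]
    (μ : Measure X) [IsProbabilityMeasure μ] :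
    ((¬∃ m : X, ∀ x, m ≤ x) →
        sInf (Set.range fun x : X => (μ (Set.Iic x)).toReal) = 0) ∧
      sSup (Set.range fun x : X => (μ (Set.Iic x)).toReal) = 1 := by
  have := nonempty_of_isProbabilityMeasure μ
  refine ⟨fun hbot => ?_, ?_⟩
  · have : NoBotOrder X := ⟨by simpa using hbot⟩
    exact (isGLB_range_measureReal_Iic μ fun _ => measurableSet_Iic).csInf_eq (range_nonempty _)
  · rw [← probReal_univ (μ := μ)]
    exact (isLUB_range_measureReal_Iic μ).csSup_eq (range_nonempty _)
end

section
/- Let X be a separable LOTS, μ a probability Borel measure on X with cdf F, and x ∈ X. If μ({x}) = 0 then F is continuous at x with respect to the order topology. -/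
open MeasureTheory Set

theorem stmt12 {X : Type*} [LinearOrder X] [TopologicalSpace X] [OrderTopology X]
    [TopologicalSpace.SeparableSpace X] [MeasurableSpace X] [BorelSpace X]
    (μ : Measure X) [IsProbabilityMeasure μ] (x : X) (hx : μ {x} = 0) :
    ContinuousAt (fun y : X => (μ (Set.Iic y)).toReal) x := by
  obtain ⟨D, hDc, hDd⟩ := TopologicalSpace.exists_countable_dense X
  have hfin : ∀ s : Set X, μ s ≠ ⊤ := fun s => (measure_lt_top μ s).ne
  have hIio : μ (Iic x) = μ (Iio x) := by
    refine le_antisymm ?_ (measure_mono Iio_subset_Iic_self)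
    rw [← Set.Iio_union_right]
    calc μ (Iio x ∪ {x}) ≤ μ (Iio x) + μ {x} := measure_union_le _ _
      _ = μ (Iio x) := by rw [hx, add_zero]
  rw [ContinuousAt]
  apply tendsto_order.2
  constructor
  · intro a ha
    by_cases ha0 : a < 0
    · exact Filter.Eventually.of_forall fun y => ha0.trans_le ENNReal.toReal_nonneg
    push_neg at ha0
    by_cases hpred : ∃ c < x, Ioo c x = ∅
    · obtain ⟨c, hc, hcx⟩ := hpred
      filter_upwards [Ioi_mem_nhds hc] with y hy
      have : x ≤ y := by
        by_contra h
        push_neg at h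
        exact absurd hcx (Set.nonempty_iff_ne_empty.1 ⟨y, hy, h⟩)
      exact ha.trans_le (ENNReal.toReal_mono (hfin _) (measure_mono (Iic_subset_Iic.2 this)))
    push_neg at hpred
    -- Iio x = ⋃ d ∈ D ∩ Iio x, Iic d
    have hunion : Iio x = ⋃ d ∈ D ∩ Iio x, Iic d := by
      apply Set.Subset.antisymm
      · intro z hz
        obtain ⟨d, hd, hdD⟩ := hDd.exists_mem_open isOpen_Ioo (hpred z hz)
        exact Set.mem_biUnion ⟨hd, hdD.2⟩ hdD.1.le
      · exact Set.iUnion₂_subset fun d hd => Iic_subset_Iio.2 hd.2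
    have hsup : μ (Iio x) = ⨆ d ∈ D ∩ Iio x, μ (Iic d) := by
      conv_lhs => rw [hunion]
      exact measure_biUnion_eq_iSup (hDc.mono Set.inter_subset_left)
        (fun i hi j hj => by
          rcases le_total i j with h | h
          · exact ⟨j, hj, Iic_subset_Iic.2 h, Set.Subset.rfl⟩
          · exact ⟨i, hi, Set.Subset.rfl, Iic_subset_Iic.2 h⟩)
    have haE : ENNReal.ofReal a < μ (Iio x) := by
      rw [← hIio]
      exact (ENNReal.ofReal_lt_iff_lt_toReal ha0 (hfin _)).2 ha
    rw [hsup, lt_iSup_iff] at haE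
    obtain ⟨d, hdE⟩ := haE
    rw [lt_iSup_iff] at hdE
    obtain ⟨⟨hdD, hdx⟩, hdE⟩ := hdE
    filter_upwards [Ioi_mem_nhds (show d < x from hdx)] with y hy
    calc a < (μ (Iic d)).toReal := (ENNReal.ofReal_lt_iff_lt_toReal ha0 (hfin _)).1 hdE
      _ ≤ (μ (Iic y)).toReal :=
        ENNReal.toReal_mono (hfin _) (measure_mono (Iic_subset_Iic.2 hy.le))
  · intro b hb
    by_cases hmax : IsMax x
    · filter_upwards with y
      exact lt_of_le_of_lt
        (ENNReal.toReal_mono (hfin _) (measure_mono (Iic_subset_Iic.2 (hmax.isTop y)))) hb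
    by_cases hsucc : ∃ c, x < c ∧ Ioo x c = ∅
    · obtain ⟨c, hc, hcx⟩ := hsucc
      filter_upwards [Iio_mem_nhds hc] with y hy
      have : y ≤ x := by
        by_contra h
        push_neg at h
        exact absurd hcx (Set.nonempty_iff_ne_empty.1 ⟨y, h, hy⟩)
      exact lt_of_le_of_lt
        (ENNReal.toReal_mono (hfin _) (measure_mono (Iic_subset_Iic.2 this))) hb
    push_neg at hsucc
    obtain ⟨c₀, hc₀⟩ := not_isMax_iff.1 hmax
    have hne : (D ∩ Ioi x).Nonempty := by
      obtain ⟨d, hd, hdD⟩ := hDd.exists_mem_open isOpen_Ioo (hsucc c₀ hc₀)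
      exact ⟨d, hd, hdD.1⟩
    have hinter : (⋂ d ∈ D ∩ Ioi x, Iic d) = Iic x := by
      apply Set.Subset.antisymm
      · intro z hz
        by_contra h
        simp only [Set.mem_Iic, not_le] at h
        obtain ⟨d, hd, hdD⟩ := hDd.exists_mem_open isOpen_Ioo (hsucc z h)
        have := Set.mem_iInter₂.1 hz d ⟨hd, hdD.1⟩
        exact absurd (Set.mem_Iic.1 this) (not_le.2 hdD.2)
      · exact Set.subset_iInter₂ fun d hd => Iic_subset_Iic.2 (le_of_lt hd.2)
    haveI : Countable ↥(D ∩ Ioi x) := (hDc.mono Set.inter_subset_left).to_subtype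
    have hinf : μ (Iic x) = ⨅ d : ↥(D ∩ Ioi x), μ (Iic (d : X)) := by
      rw [← hinter, Set.biInter_eq_iInter]
      exact Directed.measure_iInter
        (fun i => (measurableSet_Iic).nullMeasurableSet)
        (fun i j => by
          rcases le_total (i : X) (j : X) with h | h
          · exact ⟨i, Set.Subset.rfl, Iic_subset_Iic.2 h⟩
          · exact ⟨j, Iic_subset_Iic.2 h, Set.Subset.rfl⟩)
        ⟨⟨_, hne.choose_spec⟩, hfin _⟩
    have hbE : μ (Iic x) < ENNReal.ofReal b := by
      rw [ENNReal.lt_ofReal_iff_toReal_lt (hfin _)]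
      exact hb
    rw [hinf] at hbE
    obtain ⟨⟨d, hdD, hdx⟩, hd⟩ := iInf_lt_iff.1 hbE
    filter_upwards [Iio_mem_nhds (show x < d from hdx)] with y hy
    calc (μ (Iic y)).toReal ≤ (μ (Iic d)).toReal :=
        ENNReal.toReal_mono (hfin _) (measure_mono (Iic_subset_Iic.2 hy.le))
      _ < b := by
        rw [← ENNReal.lt_ofReal_iff_toReal_lt (hfin _)]
        exact hd
end

section
/- Let X be a separable LOTS, F the cdf of a probability Borel measure μ, F_-(x) = μ((−∞,x)), and G the pseudo-inverse of F. If x ∈ X and r ∈ [0,1] satisfy F_-(x) < r ≤ F(x), then G is defined at r and G(r) = x. -/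
open MeasureTheory

theorem stmt16 {X : Type*} [LinearOrder X] [TopologicalSpace X] [OrderTopology X]
    [TopologicalSpace.SeparableSpace X] [MeasurableSpace X] [BorelSpace X]
    (μ : Measure X) [IsProbabilityMeasure μ] (x : X) (r : ℝ)
    (hr : r ∈ Set.Icc (0 : ℝ) 1)
    (h1 : (μ (Set.Iio x)).toReal < r) (h2 : r ≤ (μ (Set.Iic x)).toReal) :
    IsGLB {y : X | r ≤ (μ (Set.Iic y)).toReal} x := by
  constructor
  · intro y hy
    by_contra h
    push_neg at h
    have hsub : Set.Iic y ⊆ Set.Iio x := fun z hz => lt_of_le_of_lt hz h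
    have := ENNReal.toReal_mono (measure_ne_top μ _) (measure_mono hsub)
    exact absurd (le_trans hy this) (not_le.mpr h1)
  · intro b hb
    exact hb h2
end

section
/- Let X be a separable LOTS, F the cdf of a probability Borel measure μ, and G its pseudo-inverse. Then μ({x}) = 0 for all x ∈ X if and only if G is injective (on its domain of definition). -/
/-!
If `μ` has no atoms and `g` is the infimum of both `{F ≥ r}` and `{F ≥ s}`, then `F < r` to the
left of `g` and `F ≥ s` to its right. Intervals of a separable order topology have countable
cofinality, so continuity of `μ` along `(-∞, g)` and `(g, ∞)` gives `μ (-∞, g) ≤ r` and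
`μ (g, ∞) ≤ 1 - s`, hence `s ≤ r`. Conversely, an atom at `x` makes `x` the least point of
`{F ≥ c}` for every `c` in `(μ (-∞, x), F x]`.
-/
open MeasureTheory Set

section SeparableLinearOrder

variable {X : Type*} [LinearOrder X] [TopologicalSpace X] [OrderTopology X]
  [TopologicalSpace.SeparableSpace X] [MeasurableSpace X]

theorem measure_Iio_eq_iSup_measure_Iic (μ : Measure X) (x : X) :
    μ (Iio x) = ⨆ y : Iio x, μ (Iic (y : X)) := by
  -- `Iio x` is open, hence separable, so `atTop` on it is countably generated.
  have : TopologicalSpace.SeparableSpace (Iio x) :=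
    isOpen_Iio.isOpenEmbedding_subtypeVal.separableSpace
  rw [← Monotone.measure_iUnion (s := fun y : Iio x => Iic (y : X))
    fun a b hab => Iic_subset_Iic.2 hab]
  congr 1
  ext z
  simpa using ⟨fun h => ⟨z, h, le_rfl⟩, fun ⟨y, hy, hzy⟩ => hzy.trans_lt hy⟩

theorem measureReal_Iio_le_of_forall_lt {μ : Measure X} [IsFiniteMeasure μ] {x : X} {c : ℝ}
    (hc : 0 ≤ c) (h : ∀ y < x, μ.real (Iic y) ≤ c) : μ.real (Iio x) ≤ c := by
  refine ENNReal.toReal_le_of_le_ofReal hc ?_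
  rw [measure_Iio_eq_iSup_measure_Iic]
  refine iSup_le fun y => ?_
  exact (ENNReal.le_ofReal_iff_toReal_le (measure_ne_top μ _) hc).2 (h y y.2)

theorem measureReal_Ioi_le_of_forall_gt {μ : Measure X} [IsFiniteMeasure μ] {x : X} {c : ℝ}
    (hc : 0 ≤ c) (h : ∀ y > x, μ.real (Ici y) ≤ c) : μ.real (Ioi x) ≤ c :=
  @measureReal_Iio_le_of_forall_lt Xᵒᵈ _ _ _ _ _ μ ‹_› x c hc h

end SeparableLinearOrder

section CDF

variable {X : Type*} [LinearOrder X] [MeasurableSpace X] {μ : Measure X}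

theorem measureReal_Iio_lt_measureReal_Iic [MeasurableSingletonClass X] [IsFiniteMeasure μ]
    {x : X} (hx : μ {x} ≠ 0) : μ.real (Iio x) < μ.real (Iic x) := by
  rw [← Iio_union_right, measureReal_union (by simp) (measurableSet_singleton x)]
  exact lt_add_of_pos_right _ (ENNReal.toReal_pos hx (measure_ne_top μ _))

theorem isLeast_setOf_le_measureReal_Iic [IsFiniteMeasure μ] {x : X} {c : ℝ}
    (hlt : μ.real (Iio x) < c) (hle : c ≤ μ.real (Iic x)) :
    IsLeast {y | c ≤ μ.real (Iic y)} x := by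
  refine ⟨hle, fun y hy => not_lt.1 fun hyx => ?_⟩
  have : μ.real (Iic y) ≤ μ.real (Iio x) := measureReal_mono (Iic_subset_Iio.2 hyx)
  exact (hy.trans this).not_gt hlt

variable [TopologicalSpace X] [OrderTopology X] [TopologicalSpace.SeparableSpace X]
  [OpensMeasurableSpace X] [IsProbabilityMeasure μ] [NullSingletonClass μ]

theorem le_of_isGLB_setOf_le_measureReal_Iic {r s : ℝ} (hr : 0 ≤ r) (hs : s ≤ 1) {g : X}
    (hgr : IsGLB {y | r ≤ μ.real (Iic y)} g) (hgs : IsGLB {y | s ≤ μ.real (Iic y)} g) :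
    s ≤ r := by
  have below : μ.real (Iio g) ≤ r := by
    refine measureReal_Iio_le_of_forall_lt hr fun y hyg => not_lt.1 fun hy => ?_
    exact (hgr.1 hy.le).not_gt hyg
  have above : μ.real (Ioi g) ≤ 1 - s := by
    refine measureReal_Ioi_le_of_forall_gt (sub_nonneg.2 hs) fun y hgy => ?_
    obtain ⟨z, hz, -, hzy⟩ := hgs.exists_between hgy
    have : s ≤ μ.real (Iic y) := hz.trans (measureReal_mono (Iic_subset_Iic.2 hzy.le))
    rw [measureReal_congr Ioi_ae_eq_Ici.symm, ← compl_Iic,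
      probReal_compl_eq_one_sub measurableSet_Iic]
    linarith
  have : (1 : ℝ) ≤ r + (1 - s) := calc
    (1 : ℝ) = μ.real (Iio g ∪ Ici g) := by rw [Iio_union_Ici, probReal_univ]
    _ ≤ μ.real (Iio g) + μ.real (Ioi g) := by
      rw [measureReal_congr (Ioi_ae_eq_Ici (μ := μ) (a := g))]; exact measureReal_union_le _ _
    _ ≤ r + (1 - s) := add_le_add below above
  linarith

end CDF

theorem stmt17 {X : Type*} [LinearOrder X] [TopologicalSpace X] [OrderTopology X]
    [TopologicalSpace.SeparableSpace X] [MeasurableSpace X] [BorelSpace X]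
    (μ : Measure X) [IsProbabilityMeasure μ] :
    (∀ x : X, μ {x} = 0) ↔
      ∀ r s : ℝ, r ∈ Set.Icc (0 : ℝ) 1 → s ∈ Set.Icc (0 : ℝ) 1 →
        ∀ g : X, IsGLB {y : X | r ≤ (μ (Set.Iic y)).toReal} g →
          IsGLB {y : X | s ≤ (μ (Set.Iic y)).toReal} g → r = s := by
  constructor
  · intro hatom r s hr hs g hgr hgs
    have : NullSingletonClass μ := ⟨hatom⟩
    exact le_antisymm (le_of_isGLB_setOf_le_measureReal_Iic hs.1 hr.2 hgs hgr)
      (le_of_isGLB_setOf_le_measureReal_Iic hr.1 hs.2 hgr hgs)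
  · intro hinj x
    by_contra hx
    have hlt := measureReal_Iio_lt_measureReal_Iic hx
    set t := μ.real (Iio x)
    set r := μ.real (Iic x)
    have ht : 0 ≤ t := measureReal_nonneg
    have hr : r ≤ 1 := measureReal_le_one
    have := hinj ((t + r) / 2) r ⟨by linarith, by linarith⟩ ⟨by linarith, hr⟩ x
      (isLeast_setOf_le_measureReal_Iic (by linarith) (by linarith)).isGLB
      (isLeast_setOf_le_measureReal_Iic hlt le_rfl).isGLB
    linarith
end
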